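/- arXiv:math/0405107 — 2 statements merged into one kernel-verified Lean document; each statement's English description precedes it below -/
import Mathlib

section
/- Let X_n be the sum of all reduced words of length n in F_2 = ⟨a,b⟩ and let E: C[F_2] → C[⟨h⟩] extract the components along powers of h = aba^{-1}b^{-1}. Then E(X_n) = h^{n/4} + h^{-n/4} if 4 divides n and n ≥ 4, and E(X_n) = 0 if n ≥ 1 and 4 does not divide n. -/
/-!
The coefficient of `Xₙ` at `g` is `1` exactly when the reduced word of `g` has length `n`.
The word `aba⁻¹b⁻¹` is cyclically reduced (its last letter does not cancel its first), so the
reduced word of `hᵐ` is `|m|` copies of it and has length `4|m|`. Hence `Xₙ` has coefficient `1`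
at `hᵐ` iff `n = 4|m|`.
-/

noncomputable def Xw (N : ℕ) (n : ℕ) : MonoidAlgebra ℂ (FreeGroup (Fin N)) :=
  ∑ᶠ g ∈ {g : FreeGroup (Fin N) | (FreeGroup.toWord g).length = n}, MonoidAlgebra.single g (1:ℂ)

namespace FreeGroup

variable {α : Type*}

theorem isCyclicallyReduced_commutator_word {a b : α} (hab : a ≠ b) :
    IsCyclicallyReduced [(a, true), (b, true), (a, false), (b, false)] := by
  simp [isCyclicallyReduced_iff, IsReduced, hab, hab.symm]

variable [DecidableEq α]

theorem finite_setOf_norm_eq [Finite α] (n : ℕ) : {g : FreeGroup α | g.norm = n}.Finite :=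
  (List.finite_length_eq _ n).preimage toWord_injective.injOn

theorem toWord_pow_of_isCyclicallyReduced {g : FreeGroup α} (hg : IsCyclicallyReduced g.toWord)
    (k : ℕ) : (g ^ k).toWord = (List.replicate k g.toWord).flatten := by
  rw [toWord_pow, (hg.flatten_replicate k).isReduced.reduce_eq]

theorem norm_zpow_of_isCyclicallyReduced {g : FreeGroup α} (hg : IsCyclicallyReduced g.toWord)
    (m : ℤ) : (g ^ m).norm = m.natAbs * g.norm := by
  obtain ⟨k, rfl | rfl⟩ := Int.eq_nat_or_neg m
  · simp [FreeGroup.norm, toWord_pow_of_isCyclicallyReduced hg]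
  · rw [zpow_neg, norm_inv_eq, zpow_natCast]
    simp [FreeGroup.norm, toWord_pow_of_isCyclicallyReduced hg]

theorem toWord_commutator_of_ne {a b : α} (hab : a ≠ b) :
    (of a * of b * (of a)⁻¹ * (of b)⁻¹).toWord = [(a, true), (b, true), (a, false), (b, false)] := by
  rw [← (isCyclicallyReduced_commutator_word hab).isReduced.reduce_eq, ← toWord_mk]
  rfl

theorem norm_zpow_commutator_of_ne {a b : α} (hab : a ≠ b) (m : ℤ) :
    ((of a * of b * (of a)⁻¹ * (of b)⁻¹) ^ m).norm = 4 * m.natAbs := by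
  have hword := toWord_commutator_of_ne hab
  rw [norm_zpow_of_isCyclicallyReduced (hword ▸ isCyclicallyReduced_commutator_word hab),
    FreeGroup.norm, hword, mul_comm]
  rfl

end FreeGroup

open FreeGroup

theorem coeff_Xw (N n : ℕ) (g : FreeGroup (Fin N)) :
    (Xw N n).coeff g = if g.norm = n then 1 else 0 := by
  classical
  change (∑ᶠ g ∈ {g : FreeGroup (Fin N) | g.norm = n}, MonoidAlgebra.single g (1 : ℂ)).coeff g = _
  rw [finsum_mem_eq_finite_toFinset_sum _ (finite_setOf_norm_eq n), MonoidAlgebra.coeff_sum]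
  simp [Finsupp.single_apply]

/-- With `E : ℂ[F₂] → ℂ[⟨h⟩]` extracting the `h`-power components (`h = aba⁻¹b⁻¹`):
`E(Xₙ) = h^{n/4} + h^{-n/4}` if `4 ∣ n`, `n ≥ 4`, and `E(Xₙ) = 0` for `n ≥ 1` with
`4 ∤ n`; stated via the coefficients of `Xₙ` at the powers of `h`. -/
theorem stmt_11
    (h : FreeGroup (Fin 2))
    (hh : h = FreeGroup.of 0 * FreeGroup.of 1 * (FreeGroup.of 0)⁻¹ * (FreeGroup.of 1)⁻¹) :
    (∀ n : ℕ, 4 ∣ n → 4 ≤ n → ∀ m : ℤ,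
      (Xw 2 n).coeff (h ^ m) = if m = ((n / 4 : ℕ) : ℤ) ∨ m = -((n / 4 : ℕ) : ℤ) then 1 else 0) ∧
    (∀ n : ℕ, 1 ≤ n → ¬ (4 ∣ n) → ∀ m : ℤ, (Xw 2 n).coeff (h ^ m) = 0) := by
  subst hh
  simp only [coeff_Xw, norm_zpow_commutator_of_ne (zero_ne_one : (0 : Fin 2) ≠ 1)]
  refine ⟨fun n ⟨q, hq⟩ _ m => ?_, fun n _ hn m => if_neg fun hm => hn ⟨m.natAbs, hm.symm⟩⟩
  subst hq
  rw [Nat.mul_div_cancel_left q four_pos]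
  exact if_congr ((Nat.mul_right_inj four_ne_zero).trans Int.natAbs_eq_iff) rfl rfl
end

section
/- Define coefficients p and q by p_0^2 = 4, q_1^3 = 7, and recursively: if x^{2k-1} = X_{2k-1} + Σ_j q_{2j-1}^{2k-1} X_{2j-1}, then x^{2k} = X_{2k} + Σ_j p_{2j}^{2k} X_{2j} with p_{2k-2}^{2k} = 3 + q_{2k-3}^{2k-1}, p_{2j}^{2k} = 3q_{2j+1}^{2k-1} + q_{2j-1}^{2k-1} for 1 ≤ j ≤ k−2, and p_0^{2k} = 4q_1^{2k-1}; similarly q_{2k-1}^{2k+1} = 3 + p_{2k-2}^{2k}, q_{2j-1}^{2k+1} = 3p_{2j}^{2k} + p_{2j-2}^{2k} for 2 ≤ j ≤ k−1, and q_1^{2k+1} = 3p_2^{2k} + p_0^{2k}. Then for x = a+b+a^{-1}+b^{-1} ∈ C[F_2], x^n = X_n + Σ (appropriate p or q coefficients)·X_{n-2j} for all n ≥ 2, where X_m is the sum of length-m reduced words. -/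
open FreeGroup MonoidAlgebra

noncomputable def cf (m : ℕ) : ℂ := if m = 0 then 0 else if m = 1 then 4 else 3

abbrev Fg := FreeGroup (Fin 2)
abbrev Alg := MonoidAlgebra ℂ Fg

lemma Sfin (n : ℕ) : {g : Fg | (FreeGroup.toWord g).length = n}.Finite := by
  have : {g : Fg | (FreeGroup.toWord g).length = n} =
      FreeGroup.toWord ⁻¹' {L | L.length = n} := rfl
  rw [this]
  exact Set.Finite.preimage FreeGroup.toWord_injective.injOn (List.finite_length_eq _ n)

lemma Xw_apply (m : ℕ) (w : Fg) :
    (Xw 2 m).coeff w = if (FreeGroup.toWord w).length = m then 1 else 0 := by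
  rw [Xw, finsum_mem_eq_finite_toFinset_sum _ (Sfin m), MonoidAlgebra.coeff_sum,
    Finset.sum_apply']
  by_cases h : (FreeGroup.toWord w).length = m
  · rw [Finset.sum_eq_single w]
    · simp [h, MonoidAlgebra.coeff_single, Finsupp.single_apply]
    · intro g _ hgw; simp [MonoidAlgebra.coeff_single, Finsupp.single_apply, hgw]
    · intro hw; exact absurd ((Sfin m).mem_toFinset.mpr h) hw
  · rw [if_neg h, Finset.sum_eq_zero]
    intro g hg
    have hg' : g ≠ w := by rintro rfl; exact h ((Sfin m).mem_toFinset.mp hg)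
    simp [MonoidAlgebra.coeff_single, Finsupp.single_apply, hg']

lemma toWord_lett_mul (q : Fin 2 × Bool) (w : Fg) :
    FreeGroup.toWord (FreeGroup.mk [q] * w) =
      List.casesOn (FreeGroup.toWord w) [q]
        (fun hd tl => if q.1 = hd.1 ∧ q.2 = !hd.2 then tl else q :: hd :: tl) := by
  conv_lhs => rw [← FreeGroup.mk_toWord (x := w), FreeGroup.mul_mk]
  rw [show [q] ++ FreeGroup.toWord w = q :: FreeGroup.toWord w from rfl,
    FreeGroup.toWord_mk, FreeGroup.reduce.cons, FreeGroup.reduce_toWord]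

lemma Xw_zero : Xw 2 0 = 1 := by
  have : {g : Fg | (FreeGroup.toWord g).length = 0} = {1} := by
    ext g; simp [List.length_eq_zero_iff, FreeGroup.toWord_eq_nil_iff]
  rw [Xw, this, finsum_mem_singleton, MonoidAlgebra.one_def]

lemma mulXw (x : Alg)
    (hx : x = MonoidAlgebra.single (FreeGroup.of 0) 1 + MonoidAlgebra.single (FreeGroup.of 1) 1
        + MonoidAlgebra.single (FreeGroup.of 0)⁻¹ 1 + MonoidAlgebra.single (FreeGroup.of 1)⁻¹ 1)
    (m : ℕ) : x * Xw 2 m = Xw 2 (m + 1) + cf m • Xw 2 (m - 1) := by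
  have hof : ∀ i : Fin 2, FreeGroup.of i = FreeGroup.mk [(i, true)] := fun i => rfl
  have hinv : ∀ i : Fin 2, (FreeGroup.of i)⁻¹ = FreeGroup.mk [(i, false)] := by
    intro i; rw [hof, FreeGroup.inv_mk]; rfl
  refine MonoidAlgebra.coeff_injective (Finsupp.ext fun w => ?_)
  rw [hx, add_mul, add_mul, add_mul]
  rw [MonoidAlgebra.coeff_add, MonoidAlgebra.coeff_add, MonoidAlgebra.coeff_add,
    MonoidAlgebra.coeff_add, MonoidAlgebra.coeff_smul]
  rw [Finsupp.add_apply, Finsupp.add_apply, Finsupp.add_apply, Finsupp.add_apply,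
    Finsupp.smul_apply]
  rw [MonoidAlgebra.coeff_single_mul_apply, MonoidAlgebra.coeff_single_mul_apply,
    MonoidAlgebra.coeff_single_mul_apply, MonoidAlgebra.coeff_single_mul_apply]
  rw [inv_inv, inv_inv, hinv, hinv, hof, hof]
  rw [Xw_apply, Xw_apply, Xw_apply, Xw_apply, Xw_apply, Xw_apply]
  rw [toWord_lett_mul, toWord_lett_mul, toWord_lett_mul, toWord_lett_mul]
  rcases h : FreeGroup.toWord w with _ | ⟨⟨i, s⟩, t⟩
  · simp only [cf, List.length_nil, List.length_cons, one_mul, smul_eq_mul]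
    split_ifs <;> first | omega | (exact (‹False›).elim) | norm_num
  · fin_cases i <;> cases s <;>
      simp only [cf, List.length_cons, one_mul, smul_eq_mul] <;>
      norm_num <;> split_ifs <;> first | omega | (exact (‹False›).elim) | norm_num

lemma stepE (x : Alg) (X : ℕ → Alg) (hm : ∀ m, x * X m = X (m + 1) + cf m • X (m - 1))
    (c : ℕ → ℂ) (k : ℕ) (hc : c (k + 1) = 0) :
    x * (∑ j ∈ Finset.range (k + 1), c j • X (2 * j)) =
      ∑ j ∈ Finset.range (k + 1), (c j + 3 * c (j + 1)) • X (2 * j + 1) := by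
  rw [Finset.mul_sum]
  simp only [mul_smul_comm, hm, smul_add, smul_smul, add_smul]
  rw [Finset.sum_add_distrib, Finset.sum_add_distrib]
  congr 1
  rw [Finset.sum_range_succ', Finset.sum_range_succ, hc]
  norm_num [cf]
  apply Finset.sum_congr rfl
  intro j _
  rw [mul_comm, show 2 * (j + 1) - 1 = 2 * j + 1 from by omega]

lemma stepO (x : Alg) (X : ℕ → Alg) (hm : ∀ m, x * X m = X (m + 1) + cf m • X (m - 1))
    (c : ℕ → ℂ) (k : ℕ) (hc : c (k + 1) = 0) :
    x * (∑ j ∈ Finset.range (k + 1), c j • X (2 * j + 1)) =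
      (4 * c 0) • X 0 + ∑ j ∈ Finset.range (k + 1), (c j + 3 * c (j + 1)) • X (2 * j + 2) := by
  rw [Finset.mul_sum]
  simp only [mul_smul_comm, hm, smul_add, smul_smul, add_smul]
  rw [Finset.sum_add_distrib, Finset.sum_add_distrib]
  have h1 : ∑ j ∈ Finset.range (k + 1), (c j) • X (2 * j + 1 + 1) =
      ∑ j ∈ Finset.range (k + 1), (c j) • X (2 * j + 2) := rfl
  have h2 : ∑ j ∈ Finset.range (k + 1), (c j * cf (2 * j + 1)) • X (2 * j + 1 - 1) =
      (4 * c 0) • X 0 + ∑ j ∈ Finset.range (k + 1), (3 * c (j + 1)) • X (2 * j + 2) := by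
    rw [Finset.sum_range_succ', Finset.sum_range_succ, hc]
    norm_num [cf]
    rw [add_comm]
    congr 1
    · rw [mul_comm]
    · apply Finset.sum_congr rfl
      intro j _
      rw [mul_comm, show 2 * (j + 1) = 2 * j + 2 from by omega]
  rw [h1, h2]
  abel


/-- Write `x^{2k} = Σ_{j=0}^{k} p_{2j}^{2k} X_{2j}` and
`x^{2k+1} = Σ_{j=0}^{k} q_{2j+1}^{2k+1} X_{2j+1}` (here `P k j = p_{2j}^{2k}`,
`Q k j = q_{2j+1}^{2k+1}`, and `Xw 2 0 = e`).  If the coefficients satisfy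
`p₀² = 4`, `q₁³ = 7`, the leading coefficients are `1`, and the recurrences
`Q k j = P k j + 3 P k (j+1)` (equivalently
`q_{2k-1}^{2k+1} = 3 + p_{2k-2}^{2k}`, `q_{2j-1}^{2k+1} = 3p_{2j}^{2k} + p_{2j-2}^{2k}`),
`P (k+1) 0 = 4 Q k 0` (i.e. `p₀^{2k} = 4 q₁^{2k-1}`) and
`P (k+1) j = Q k (j-1) + 3 Q k j` for `j ≥ 1` (i.e. `p_{2j}^{2k} = 3q_{2j+1}^{2k-1} + q_{2j-1}^{2k-1}`),
then for `x = a + b + a⁻¹ + b⁻¹ ∈ ℂ[F₂]` these really are the coefficients of the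
expansions of the powers of `x` in the `Xₘ`. -/
theorem stmt_12
    (x : MonoidAlgebra ℂ (FreeGroup (Fin 2)))
    (hx : x = MonoidAlgebra.single (FreeGroup.of 0) 1 + MonoidAlgebra.single (FreeGroup.of 1) 1
        + MonoidAlgebra.single (FreeGroup.of 0)⁻¹ 1 + MonoidAlgebra.single (FreeGroup.of 1)⁻¹ 1)
    (P Q : ℕ → ℕ → ℂ)
    (hP10 : P 1 0 = 4) (hP11 : P 1 1 = 1)
    (hQ10 : Q 1 0 = 7) (hQ11 : Q 1 1 = 1)
    (hPtop : ∀ k j, k < j → P k j = 0)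
    (hQtop : ∀ k j, k < j → Q k j = 0)
    (hQrec : ∀ k, 1 ≤ k → ∀ j, Q k j = P k j + 3 * P k (j + 1))
    (hPrec0 : ∀ k, 1 ≤ k → P (k + 1) 0 = 4 * Q k 0)
    (hPrec : ∀ k, 1 ≤ k → ∀ j, 1 ≤ j → P (k + 1) j = Q k (j - 1) + 3 * Q k j) :
    ∀ k, 1 ≤ k →
      x ^ (2 * k) = ∑ j ∈ Finset.range (k + 1), P k j • Xw 2 (2 * j) ∧
      x ^ (2 * k + 1) = ∑ j ∈ Finset.range (k + 1), Q k j • Xw 2 (2 * j + 1) := by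

  have hm : ∀ m, x * Xw 2 m = Xw 2 (m + 1) + cf m • Xw 2 (m - 1) := mulXw x hx
  have hx1 : x = Xw 2 1 := by
    have h0 := hm 0
    rw [Xw_zero, mul_one] at h0
    simpa [cf] using h0
  have oddstep : ∀ k, 1 ≤ k →
      x ^ (2 * k) = ∑ j ∈ Finset.range (k + 1), P k j • Xw 2 (2 * j) →
      x ^ (2 * k + 1) = ∑ j ∈ Finset.range (k + 1), Q k j • Xw 2 (2 * j + 1) := by
    intro k hk hE
    rw [pow_succ', hE, stepE x (Xw 2) hm (P k) k (hPtop k (k + 1) (by omega))]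
    exact Finset.sum_congr rfl fun j _ => by rw [hQrec k hk j]
  have evenstep : ∀ k, 1 ≤ k →
      x ^ (2 * k + 1) = ∑ j ∈ Finset.range (k + 1), Q k j • Xw 2 (2 * j + 1) →
      x ^ (2 * (k + 1)) = ∑ j ∈ Finset.range (k + 1 + 1), P (k + 1) j • Xw 2 (2 * j) := by
    intro k hk hO
    rw [show 2 * (k + 1) = (2 * k + 1) + 1 from by ring, pow_succ', hO,
      stepO x (Xw 2) hm (Q k) k (hQtop k (k + 1) (by omega))]
    conv_rhs => rw [Finset.sum_range_succ']
    rw [add_comm ((4 * Q k 0) • Xw 2 0)]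
    congr 1
    · apply Finset.sum_congr rfl
      intro j _
      rw [hPrec k hk (j + 1) (by omega), Nat.add_sub_cancel,
        show 2 * (j + 1) = 2 * j + 2 from by omega]
    · rw [hPrec0 k hk, show 2 * 0 = 0 from rfl]
  intro k hk
  induction k, hk using Nat.le_induction with
  | base =>
    have h2 : x ^ (2 * 1) = ∑ j ∈ Finset.range (1 + 1), P 1 j • Xw 2 (2 * j) := by
      rw [show 2 * 1 = 2 from rfl, pow_two]
      nth_rewrite 2 [hx1]
      rw [hm 1, Finset.sum_range_succ, Finset.sum_range_succ, Finset.sum_range_zero,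
        hP10, hP11]
      simp only [cf]
      norm_num
      abel
    exact ⟨h2, oddstep 1 le_rfl h2⟩
  | succ k hk ih =>
    have hE := evenstep k hk ih.2
    exact ⟨hE, oddstep (k + 1) (by omega) hE⟩
end
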